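/- arXiv:2404.16199 — 2 statements merged into one kernel-verified Lean document; each statement's English description precedes it below -/
import Mathlib

section
/- Let f be a meromorphic function on ℂ with period 1 (f(z+1) = f(z) for all z) whose poles lie only in ℤ, and suppose there is a constant C with 0 ≤ C < π such that |f(x + i y)| = O(e^{C|y|}) as y → ∞, uniformly for x in compact subsets of ℝ. Then f is a polynomial in cot(πz): there exists a polynomial P with complex coefficients such that f(z) = P(cot(πz)) for all z ∈ ℂ ∖ ℤ. -/
open Complex Filter Function Set Asymptotics
open scoped Real Topology

noncomputable section


/-- dslope of an analytic function is analytic. -/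
lemma aux_analyticAt_dslope {g : ℂ → ℂ} {x : ℂ} (h : AnalyticAt ℂ g x) :
    AnalyticAt ℂ (dslope g x) x := by
  obtain ⟨p, hp⟩ := h
  exact ⟨p.fslope, hp.has_fpower_series_dslope_fslope⟩

/-- The set of integer points in ℂ is closed. -/
lemma aux_int_closed : IsClosed {z : ℂ | ∃ n : ℤ, z = (n : ℂ)} := by
  have hπ : (Real.pi : ℂ) ≠ 0 := Complex.ofReal_ne_zero.mpr Real.pi_ne_zero
  have : {z : ℂ | ∃ n : ℤ, z = (n : ℂ)}
      = (fun z => Complex.sin ((Real.pi : ℂ) * z)) ⁻¹' {0} := by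
    ext z
    simp only [Set.mem_setOf_eq, Set.mem_preimage, Set.mem_singleton_iff,
      Complex.sin_eq_zero_iff]
    constructor
    · rintro ⟨n, rfl⟩; exact ⟨n, by ring⟩
    · rintro ⟨k, hk⟩
      refine ⟨k, mul_left_cancel₀ hπ ?_⟩
      rw [hk]; ring
  rw [this]
  exact isClosed_singleton.preimage (Complex.continuous_sin.comp (continuous_const.mul continuous_id))

lemma aux_eventually_ne_int {z : ℂ} (hz : ∀ n : ℤ, z ≠ (n : ℂ)) :
    ∀ᶠ w in 𝓝 z, ∀ n : ℤ, w ≠ (n : ℂ) := by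
  have : {z : ℂ | ∃ n : ℤ, z = (n : ℂ)}ᶜ ∈ 𝓝 z :=
    aux_int_closed.isOpen_compl.mem_nhds (by simpa using hz)
  filter_upwards [this] with w hw
  simpa using hw

lemma aux_nonint_of_close {z : ℂ} {n : ℤ} (h1 : z ≠ (n : ℂ)) (h2 : norm (z - n) < 1) :
    ∀ k : ℤ, z ≠ (k : ℂ) := by
  intro k hk
  subst hk
  apply h1
  have hkn : k ≠ n := by rintro rfl; simp at h1
  have : ((k - n : ℤ) : ℂ) = (k : ℂ) - n := by push_cast; ring
  rw [← this] at h2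
  have h3 : (1 : ℝ) ≤ norm ((k - n : ℤ) : ℂ) := by
    rw [Complex.norm_intCast]
    have := Int.one_le_abs (sub_ne_zero.mpr hkn)
    exact_mod_cast this
  linarith



/-- `Sfun z = sin (π z) / z` (suitably extended at `0`). -/
def Sfun : ℂ → ℂ := dslope (fun z => Complex.sin ((Real.pi : ℂ) * z)) 0

lemma Sfun_anal : AnalyticAt ℂ Sfun 0 := by
  apply aux_analyticAt_dslope
  exact (Complex.differentiable_sin.comp ((differentiable_const _).mul differentiable_id)).analyticAt 0

lemma Sfun_zero : Sfun 0 = (Real.pi : ℂ) := by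
  rw [Sfun, dslope_same]
  have h : HasDerivAt (fun z : ℂ => Complex.sin ((Real.pi : ℂ) * z))
      (Complex.cos ((Real.pi : ℂ) * 0) * ((Real.pi : ℂ) * 1)) 0 := by
    exact (Complex.hasDerivAt_sin ((Real.pi : ℂ) * 0)).comp 0 ((hasDerivAt_id (0 : ℂ)).const_mul _)
  simpa using h.deriv

lemma sin_eq_mul_Sfun (z : ℂ) : Complex.sin ((Real.pi : ℂ) * z) = z * Sfun z := by
  have := sub_smul_dslope (fun z => Complex.sin ((Real.pi : ℂ) * z)) 0 z
  simp only [sub_zero, smul_eq_mul, mul_zero, Complex.sin_zero] at this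
  rw [← this, Sfun]

/-- `cfun z = z * cot (π z)` (suitably extended at `0`). -/
def cfun : ℂ → ℂ := fun z => Complex.cos ((Real.pi : ℂ) * z) / Sfun z

lemma cfun_anal : AnalyticAt ℂ cfun 0 := by
  apply AnalyticAt.div
  · exact (Complex.differentiable_cos.comp ((differentiable_const _).mul differentiable_id)).analyticAt 0
  · exact Sfun_anal
  · rw [Sfun_zero]; exact Complex.ofReal_ne_zero.mpr Real.pi_ne_zero

lemma cfun_zero : cfun 0 = 1 / (Real.pi : ℂ) := by
  simp [cfun, Sfun_zero]

lemma cot_eq_cfun_div (z : ℂ) : Complex.cot ((Real.pi : ℂ) * z) = cfun z / z := by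
  rw [Complex.cot_eq_cos_div_sin, sin_eq_mul_Sfun, cfun, div_div]; ring_nf

lemma cot_add_pi' (w : ℂ) : Complex.cot (w + (Real.pi : ℂ)) = Complex.cot w := by
  rw [Complex.cot_eq_cos_div_sin, Complex.cot_eq_cos_div_sin, Complex.sin_add_pi,
    Complex.cos_add_pi, neg_div_neg_eq]

lemma cot_anal {z : ℂ} (hz : ∀ n : ℤ, z ≠ (n : ℂ)) :
    AnalyticAt ℂ (fun w => Complex.cot ((Real.pi : ℂ) * w)) z := by
  have hπ : (Real.pi : ℂ) ≠ 0 := Complex.ofReal_ne_zero.mpr Real.pi_ne_zero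
  have hsin : Complex.sin ((Real.pi : ℂ) * z) ≠ 0 := by
    rw [Ne, Complex.sin_eq_zero_iff]
    rintro ⟨k, hk⟩
    exact hz k (mul_left_cancel₀ hπ (by rw [hk]; ring))
  have h1 : AnalyticAt ℂ
      (fun w => Complex.cos ((Real.pi : ℂ) * w) / Complex.sin ((Real.pi : ℂ) * w)) z := by
    apply AnalyticAt.div
    · exact (Complex.differentiable_cos.comp
        ((differentiable_const _).mul differentiable_id)).analyticAt z
    · exact (Complex.differentiable_sin.comp
        ((differentiable_const _).mul differentiable_id)).analyticAt z
    · exact hsin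
  simpa only [← Complex.cot_eq_cos_div_sin] using h1

lemma cot_bound (z : ℂ) (hz : 1 ≤ |z.im|) :
    norm (Complex.cot ((Real.pi : ℂ) * z)) ≤ 4 := by
  rw [Complex.cot_pi_eq_exp_ratio]
  set q := Complex.exp (2 * (Real.pi : ℂ) * Complex.I * z) with hq
  have habs : norm q = Real.exp (-(2 * Real.pi) * z.im) := by
    rw [hq, Complex.norm_exp]
    congr 1
    have : (2 * (Real.pi : ℂ) * Complex.I * z) = Complex.I * ((2 * Real.pi : ℝ) * z) := by
      push_cast; ring
    rw [this]
    simp [Complex.mul_re, Complex.mul_im]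
    try ring
  rw [norm_div, norm_mul, Complex.norm_I, one_mul]
  have he : (2 : ℝ) * Real.pi + 1 ≤ Real.exp (2 * Real.pi) := Real.add_one_le_exp _
  have hpi : (3:ℝ) ≤ Real.pi := by linarith [Real.pi_gt_three]
  rcases le_or_gt 1 z.im with hy | hy
  · have h1 : norm q ≤ 1 / 2 := by
      rw [habs]
      have h2 : Real.exp (-(2 * Real.pi) * z.im) ≤ Real.exp (-(2 * Real.pi)) := by
        apply Real.exp_le_exp.mpr; nlinarith
      have h3 : Real.exp (-(2 * Real.pi)) ≤ 1 / 2 := by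
        rw [Real.exp_neg]
        rw [inv_le_comm₀ (Real.exp_pos _) (by norm_num)]
        linarith
      linarith
    have hnum : norm (q + 1) ≤ 3 / 2 := by
      calc norm (q + 1) ≤ norm q + norm 1 := norm_add_le _ _
        _ ≤ 3 / 2 := by rw [norm_one]; linarith
    have hden : 1 / 2 ≤ norm (1 - q) := by
      have := norm_sub_norm_le (1 : ℂ) q
      simp only [norm_one] at this
      linarith
    calc norm (q + 1) / norm (1 - q) ≤ (3 / 2) / (1 / 2) :=
          div_le_div₀ (by norm_num) hnum (by norm_num) hden
      _ ≤ 4 := by norm_num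
  · have hy' : z.im ≤ -1 := by rcases abs_cases z.im with ⟨h1, h2⟩ | ⟨h1, h2⟩ <;> linarith
    have h2q : (2 : ℝ) ≤ norm q := by
      rw [habs]
      have h3 : (2 * Real.pi) ≤ -(2 * Real.pi) * z.im := by nlinarith
      calc (2:ℝ) ≤ Real.exp (2 * Real.pi) := by linarith
        _ ≤ Real.exp (-(2 * Real.pi) * z.im) := Real.exp_le_exp.mpr h3
    have hnum : norm (q + 1) ≤ 2 * norm q := by
      calc norm (q + 1) ≤ norm q + norm 1 := norm_add_le _ _
        _ ≤ 2 * norm q := by rw [norm_one]; linarith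
    have hden : norm q / 2 ≤ norm (1 - q) := by
      have h4 := norm_sub_norm_le q (1 : ℂ)
      simp only [norm_one] at h4
      rw [show (1 : ℂ) - q = -(q - 1) by ring, norm_neg]
      linarith
    have hA : (0:ℝ) < norm q := by linarith
    calc norm (q + 1) / norm (1 - q)
        ≤ (2 * norm q) / (norm q / 2) :=
          div_le_div₀ (by positivity) hnum (by positivity) hden
      _ = 4 := by field_simp; ring


/-- If `F` is entire, 1-periodic, with subcritical exponential growth as `im z → +∞`, then
`F` factors through `exp (2πiz)` via an entire function. -/
lemma lemA (C M : ℝ) (hC : C < 2 * Real.pi) (F : ℂ → ℂ) (hd : Differentiable ℂ F)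
    (hp : Function.Periodic F 1)
    (hM : ∀ z : ℂ, 1 ≤ z.im → norm (F z) ≤ M * Real.exp (C * z.im)) :
    ∃ Φ : ℂ → ℂ, Differentiable ℂ Φ ∧
      ∀ z : ℂ, Φ (Complex.exp (2 * (Real.pi : ℂ) * Complex.I * z)) = F z := by
  have h1 : (1 : ℝ) ≠ 0 := one_ne_zero
  set Φ := Function.Periodic.cuspFunction 1 F with hΦ
  have heq : ∀ z : ℂ, Φ (Complex.exp (2 * (Real.pi : ℂ) * Complex.I * z)) = F z := by
    intro z
    have h2 := Function.Periodic.eq_cuspFunction h1 hp z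
    rw [Function.Periodic.qParam] at h2
    simpa using h2
  have hdiff_ne : ∀ q : ℂ, q ≠ 0 → DifferentiableAt ℂ Φ q := by
    intro q hq
    have := Function.Periodic.differentiableAt_cuspFunction h1 hp
      (hd (Function.Periodic.invQParam 1 q))
    rwa [Function.Periodic.qParam_right_inv h1 hq] at this
  -- the little-o bound at 0
  have hpi : (0:ℝ) < Real.pi := Real.pi_pos
  have hexp : (0:ℝ) < 1 - C / (2 * Real.pi) := by
    rw [sub_pos, div_lt_one (by linarith)]
    exact hC
  have hlog : Tendsto (fun q : ℂ => Real.log (norm q)) (𝓝[≠] (0:ℂ)) atBot := by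
    have := Real.tendsto_log_nhdsGT_zero.comp
      (tendsto_norm_nhdsNE_zero (E := ℂ))
    simpa [Function.comp_def] using this
  have hg0 : Tendsto (fun q : ℂ => M * Real.exp ((1 - C / (2 * Real.pi)) *
      Real.log (norm q))) (𝓝[≠] (0:ℂ)) (𝓝 0) := by
    rw [show (0:ℝ) = M * 0 by ring]
    apply Tendsto.const_mul
    exact Real.tendsto_exp_atBot.comp (hlog.const_mul_atBot hexp)
  have hsmall : ∀ᶠ q : ℂ in 𝓝[≠] (0:ℂ),
      norm q < Real.exp (-(2 * Real.pi)) ∧ q ≠ 0 := by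
    have h3 : ∀ᶠ q : ℂ in 𝓝 (0:ℂ), norm q < Real.exp (-(2 * Real.pi)) := by
      have := (continuous_norm.tendsto (0:ℂ)).eventually_lt_const
        (show norm (0:ℂ) < Real.exp (-(2 * Real.pi)) by simp [Real.exp_pos])
      exact this
    filter_upwards [h3.filter_mono nhdsWithin_le_nhds, self_mem_nhdsWithin] with q h4 h5
    exact ⟨h4, h5⟩
  have hbound : ∀ᶠ q : ℂ in 𝓝[≠] (0:ℂ), ‖Φ q * q‖ ≤ M * Real.exp ((1 - C / (2 * Real.pi)) *
      Real.log (norm q)) := by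
    filter_upwards [hsmall] with q hq4
    obtain ⟨hq_small, hq0⟩ := hq4
    have habs_pos : 0 < norm q := norm_pos_iff.mpr hq0
    set L := Real.log (norm q) with hL
    have hLlt : L < -(2 * Real.pi) := (Real.log_lt_iff_lt_exp habs_pos).mpr hq_small
    set w := Function.Periodic.invQParam 1 q with hw
    have him : w.im = -1 / (2 * Real.pi) * L := by
      rw [hw, Function.Periodic.im_invQParam]
    have hwim : 1 ≤ w.im := by
      rw [him]
      rw [show (-1) / (2 * Real.pi) * L = -L / (2 * Real.pi) by ring]
      rw [le_div_iff₀ (by linarith : (0:ℝ) < 2 * Real.pi)]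
      linarith
    have hΦq : Φ q = F w := Function.Periodic.cuspFunction_eq_of_nonzero 1 F hq0
    have h5 : norm (F w) ≤ M * Real.exp (C * w.im) := hM w hwim
    have habsq : norm q = Real.exp L := (Real.exp_log habs_pos).symm
    calc ‖Φ q * q‖ = norm (F w) * norm q := by
          rw [norm_mul, hΦq]
      _ ≤ (M * Real.exp (C * w.im)) * Real.exp L := by
          rw [habsq]
          exact mul_le_mul_of_nonneg_right h5 (Real.exp_pos _).le
      _ = M * Real.exp ((1 - C / (2 * Real.pi)) * L) := by
          rw [mul_assoc, ← Real.exp_add]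
          congr 2
          rw [him]
          field_simp
          ring
  have htend : Tendsto (fun q : ℂ => Φ q * q) (𝓝[≠] (0:ℂ)) (𝓝 0) :=
    squeeze_zero_norm' hbound hg0
  have ho1 : Φ =o[𝓝[≠] (0:ℂ)] fun q => q⁻¹ := by
    rw [isLittleO_iff_tendsto']
    · have : ∀ q : ℂ, q ≠ 0 → Φ q / q⁻¹ = Φ q * q := fun q hq => by
        rw [div_eq_mul_inv, inv_inv]
      refine htend.congr' ?_
      filter_upwards [self_mem_nhdsWithin] with q hq
      exact (this q hq).symm
    · filter_upwards [self_mem_nhdsWithin] with q hq h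
      exact absurd h (inv_ne_zero hq)
  have ho2 : (fun _ : ℂ => Φ 0) =o[𝓝[≠] (0:ℂ)] fun q => q⁻¹ := by
    rw [isLittleO_iff_tendsto']
    · have htend2 : Tendsto (fun q : ℂ => Φ 0 * q) (𝓝[≠] (0:ℂ)) (𝓝 0) := by
        have h7 : Continuous (fun q : ℂ => Φ 0 * q) := continuous_const.mul continuous_id
        have h8 := h7.tendsto (0:ℂ)
        simp only [mul_zero] at h8
        exact h8.mono_left nhdsWithin_le_nhds
      refine htend2.congr' ?_
      filter_upwards [self_mem_nhdsWithin] with q hq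
      rw [div_eq_mul_inv, inv_inv]
    · filter_upwards [self_mem_nhdsWithin] with q hq h
      exact absurd h (inv_ne_zero hq)
  have ho : (fun q => Φ q - Φ 0) =o[𝓝[≠] (0:ℂ)] fun q => (q - 0)⁻¹ := by
    simpa using ho1.sub ho2
  have hc : {(0:ℂ)}ᶜ ∈ 𝓝[≠] (0:ℂ) := self_mem_nhdsWithin
  have hd' : DifferentiableOn ℂ Φ {(0:ℂ)}ᶜ := fun q hq =>
    (hdiff_ne q hq).differentiableWithinAt
  have key := Complex.differentiableOn_update_limUnder_insert_of_isLittleO hc hd' ho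
  have hupd : Function.update Φ 0 (limUnder (𝓝[≠] (0:ℂ)) Φ) = Φ := by
    rw [hΦ, ← Function.Periodic.cuspFunction_zero_eq_limUnder_nhds_ne, Function.update_eq_self]
  rw [hupd] at key
  have huniv : insert (0:ℂ) ({(0:ℂ)}ᶜ) = Set.univ := by
    ext q; by_cases hq : q = 0 <;> simp [hq]
  rw [huniv] at key
  exact ⟨Φ, differentiableOn_univ.mp key, heq⟩

/-- Liouville-type theorem: an entire 1-periodic function with subcritical exponential
growth in both imaginary directions is constant. -/
lemma lemB (C M : ℝ) (hC : C < 2 * Real.pi) (F : ℂ → ℂ) (hd : Differentiable ℂ F)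
    (hp : Function.Periodic F 1)
    (hM : ∀ z : ℂ, 1 ≤ |z.im| → norm (F z) ≤ M * Real.exp (C * |z.im|)) :
    ∀ z w : ℂ, F z = F w := by
  obtain ⟨Φ, hΦd, hΦ⟩ := lemA C M hC F hd hp (fun z hz => by
    have h1 : |z.im| = z.im := _root_.abs_of_nonneg (by linarith)
    have h2 := hM z (by rw [h1]; exact hz)
    rwa [h1] at h2)
  set G : ℂ → ℂ := fun z => F (-z) with hG
  have hGd : Differentiable ℂ G := hd.comp differentiable_neg
  have hGp : Function.Periodic G 1 := by
    intro z
    simp only [hG]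
    have h3 := hp (-z - 1)
    rw [show -z - 1 + 1 = -z by ring] at h3
    rw [show -(z + 1) = -z - 1 by ring, h3]
  have hGM : ∀ z : ℂ, 1 ≤ z.im → norm (G z) ≤ M * Real.exp (C * z.im) := by
    intro z hz
    have h4 : (-z).im = -z.im := by simp
    have h5 : |(-z).im| = z.im := by rw [h4, abs_neg, _root_.abs_of_nonneg (by linarith : (0:ℝ) ≤ z.im)]
    have h6 := hM (-z) (by rw [h5]; exact hz)
    rw [h5] at h6
    exact h6
  obtain ⟨Ψ, hΨd, hΨ⟩ := lemA C M hC G hGd hGp hGM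
  have hkey : ∀ q : ℂ, q ≠ 0 → Φ q = Ψ q⁻¹ := by
    intro q hq
    set z := Complex.log q / (2 * (Real.pi : ℂ) * Complex.I) with hz
    have hzq : Complex.exp (2 * (Real.pi : ℂ) * Complex.I * z) = q := by
      rw [hz, mul_div_cancel₀ _ Complex.two_pi_I_ne_zero, Complex.exp_log hq]
    have hzq' : Complex.exp (2 * (Real.pi : ℂ) * Complex.I * (-z)) = q⁻¹ := by
      rw [show 2 * (Real.pi : ℂ) * Complex.I * (-z) = -(2 * (Real.pi : ℂ) * Complex.I * z) by
        ring, Complex.exp_neg, hzq]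
    calc Φ q = F z := by rw [← hzq, hΦ]
      _ = G (-z) := by simp only [hG, neg_neg]
      _ = Ψ q⁻¹ := by rw [← hzq', hΨ]
  obtain ⟨δ, hδpos, hδ⟩ := Metric.continuousAt_iff.mp (hΨd.continuous.continuousAt (x := 0)) 1
    one_pos
  set R := δ⁻¹ + 1 with hR
  obtain ⟨B, hB⟩ := (isCompact_closedBall (0 : ℂ) R).exists_bound_of_continuousOn
    hΦd.continuous.continuousOn
  have hbdd : ∀ q : ℂ, ‖Φ q‖ ≤ max B (norm (Ψ 0) + 1) := by
    intro q
    by_cases hqR : norm q ≤ R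
    · refine le_trans (hB q ?_) (le_max_left _ _)
      simp only [Metric.mem_closedBall, Complex.dist_eq, sub_zero]
      exact hqR
    · push_neg at hqR
      have hδ0 : (0 : ℝ) < δ⁻¹ := by positivity
      have hq0 : q ≠ 0 := by
        intro h; rw [h] at hqR; simp only [norm_zero] at hqR; rw [hR] at hqR; linarith
      have hqinv : dist (q⁻¹) (0 : ℂ) < δ := by
        rw [Complex.dist_eq, sub_zero, norm_inv]
        have h8 : δ⁻¹ < norm q := by rw [hR] at hqR; linarith
        calc (norm q)⁻¹ < (δ⁻¹)⁻¹ := by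
              apply inv_strictAnti₀ hδ0 h8
          _ = δ := inv_inv δ
      have h9 := hδ hqinv
      rw [Complex.dist_eq] at h9
      have h10 : norm (Ψ q⁻¹) ≤ norm (Ψ 0) + 1 := by
        have := norm_sub_norm_le (Ψ q⁻¹) (Ψ 0)
        linarith
      rw [hkey q hq0]
      exact le_trans h10 (le_max_right _ _)
  have hbd : Bornology.IsBounded (Set.range Φ) := by
    rw [isBounded_iff_forall_norm_le]
    exact ⟨max B (norm (Ψ 0) + 1), by rintro y ⟨q, rfl⟩; exact hbdd q⟩
  intro z w
  calc F z = Φ (Complex.exp (2 * (Real.pi : ℂ) * Complex.I * z)) := (hΦ z).symm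
    _ = Φ (Complex.exp (2 * (Real.pi : ℂ) * Complex.I * w)) :=
        hΦd.apply_eq_apply_of_bounded hbd _ _
    _ = F w := hΦ w

/-- Key induction: a 1-periodic function, analytic off the integers, of moderate growth,
whose pole at `0` has order at most `m`, is a polynomial in `cot (π z)`. -/
lemma keyLemma (C : ℝ) (hC0 : 0 ≤ C) (hCpi : C < Real.pi) :
    ∀ m : ℕ, ∀ f : ℂ → ℂ,
    (∀ z : ℂ, f (z + 1) = f z) →
    (∀ z : ℂ, (∀ n : ℤ, z ≠ (n : ℂ)) → AnalyticAt ℂ f z) →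
    (∃ M, ∀ z : ℂ, 1 ≤ |z.im| → norm (f z) ≤ M * Real.exp (C * |z.im|)) →
    (∃ g : ℂ → ℂ, AnalyticAt ℂ g 0 ∧ ∀ᶠ z in 𝓝[≠] (0:ℂ), f z = g z / z ^ m) →
    ∃ P : Polynomial ℂ, ∀ z : ℂ, (∀ n : ℤ, z ≠ (n : ℂ)) →
      f z = Polynomial.eval (Complex.cot ((Real.pi : ℂ) * z)) P := by
  intro m
  induction m with
  | zero =>
    intro f hper hanal hstrip hex
    obtain ⟨M, hM⟩ := hstrip
    obtain ⟨g, hg, hfg⟩ := hex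
    simp only [pow_zero, div_one] at hfg
    obtain ⟨ε, hε, hεf⟩ := Metric.mem_nhdsWithin_iff.mp hfg
    classical
    set F : ℂ → ℂ := fun z => if (∀ n : ℤ, z ≠ (n : ℂ)) then f z else g 0 with hF
    have hFf : ∀ z : ℂ, (∀ n : ℤ, z ≠ (n : ℂ)) → F z = f z := fun z hz => if_pos hz
    have hFint : ∀ n : ℤ, F (n : ℂ) = g 0 := fun n => if_neg (by push_neg; exact ⟨n, rfl⟩)
    have hper' : Function.Periodic f 1 := hper
    have hFnear : ∀ n : ℤ, ∀ w : ℂ, dist w (n : ℂ) < min ε 1 → g (w - n) = F w := by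
      intro n w hw
      by_cases hwn : w = (n : ℂ)
      · subst hwn
        rw [hFint n, sub_self]
      · have h1 : norm (w - n) < 1 := by
          rw [Complex.dist_eq] at hw
          exact lt_of_lt_of_le hw (min_le_right _ _)
        have h2 : dist (w - (n:ℂ)) 0 < ε := by
          rw [Complex.dist_eq, sub_zero, ← Complex.dist_eq]
          exact lt_of_lt_of_le hw (min_le_left _ _)
        have h3 : ∀ k : ℤ, w ≠ (k : ℂ) := aux_nonint_of_close hwn h1
        have h4 : w - (n:ℂ) ∈ ({(0:ℂ)}ᶜ : Set ℂ) := by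
          simp only [Set.mem_compl_iff, Set.mem_singleton_iff]
          exact sub_ne_zero.mpr hwn
        rw [hFf w h3]
        have h5 : f (w - (n:ℂ) * 1) = f w := hper'.sub_int_mul_eq n
        rw [mul_one] at h5
        rw [← h5]
        exact (hεf ⟨Metric.mem_ball.mpr h2, h4⟩).symm
    have hFanal : ∀ z : ℂ, AnalyticAt ℂ F z := by
      intro z
      by_cases hz : ∀ n : ℤ, z ≠ (n : ℂ)
      · apply (hanal z hz).congr
        filter_upwards [aux_eventually_ne_int hz] with w hw
        exact (hFf w hw).symm
      · push_neg at hz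
        obtain ⟨n, rfl⟩ := hz
        have hgn : AnalyticAt ℂ (fun w : ℂ => g (w - n)) (n : ℂ) := by
          have hsub : AnalyticAt ℂ (fun w : ℂ => w - (n:ℂ)) (n:ℂ) :=
            analyticAt_id.sub analyticAt_const
          have h0 : AnalyticAt ℂ g ((fun w : ℂ => w - (n:ℂ)) (n:ℂ)) := by simpa using hg
          have h1 : AnalyticAt ℂ (g ∘ fun w : ℂ => w - (n:ℂ)) (n:ℂ) :=
            AnalyticAt.comp (f := fun w : ℂ => w - (n:ℂ)) h0 hsub
          exact h1
        apply hgn.congr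
        rw [Filter.EventuallyEq, Metric.eventually_nhds_iff]
        exact ⟨min ε 1, lt_min hε one_pos, fun w hw => hFnear n w hw⟩
    have hFdiff : Differentiable ℂ F := fun z => (hFanal z).differentiableAt
    have hFper : Function.Periodic F 1 := by
      intro z
      by_cases hz : ∀ n : ℤ, z ≠ (n : ℂ)
      · have hz1 : ∀ n : ℤ, z + 1 ≠ (n : ℂ) := by
          intro n h
          apply hz (n - 1)
          push_cast
          rw [eq_sub_of_add_eq h]
        rw [hFf _ hz1, hFf _ hz, hper]
      · push_neg at hz
        obtain ⟨n, rfl⟩ := hz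
        have h7 : (n : ℂ) + 1 = ((n + 1 : ℤ) : ℂ) := by push_cast; ring
        rw [h7, hFint, hFint]
    have hFgrow : ∀ z : ℂ, 1 ≤ |z.im| → norm (F z) ≤ M * Real.exp (C * |z.im|) := by
      intro z hz
      have hznon : ∀ n : ℤ, z ≠ (n : ℂ) := by
        intro n h
        rw [h] at hz
        simp only [Complex.intCast_im, abs_zero] at hz
        linarith
      rw [hFf z hznon]
      exact hM z hz
    have hconst := lemB C M (by linarith [Real.pi_pos]) F hFdiff hFper hFgrow
    refine ⟨Polynomial.C (F 0), fun z hz => ?_⟩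
    rw [Polynomial.eval_C, ← hFf z hz]
    exact hconst z 0
  | succ m ih =>
    rintro f hper hanal ⟨M, hM⟩ ⟨g, hg, hfg⟩
    have hπ : (Real.pi : ℂ) ≠ 0 := Complex.ofReal_ne_zero.mpr Real.pi_ne_zero
    set a := g 0 with ha
    set lam : ℂ := a * (Real.pi : ℂ) ^ (m + 1) with hlam
    set f₁ : ℂ → ℂ := fun z => f z - lam * (Complex.cot ((Real.pi : ℂ) * z)) ^ (m + 1) with hf₁
    set N : ℂ → ℂ := fun z => g z - lam * (cfun z) ^ (m + 1) with hNdef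
    have hNanal : AnalyticAt ℂ N 0 := hg.sub (analyticAt_const.mul (cfun_anal.pow _))
    have hN0 : N 0 = 0 := by
      simp only [hNdef, cfun_zero, hlam, ← ha]
      rw [mul_assoc, ← mul_pow, mul_one_div_cancel hπ, one_pow, mul_one, sub_self]
    set g₁ := dslope N 0 with hg₁def
    have hg₁ : AnalyticAt ℂ g₁ 0 := aux_analyticAt_dslope hNanal
    have hfac : ∀ z : ℂ, N z = z * g₁ z := by
      intro z
      have h6 := sub_smul_dslope N 0 z
      rw [sub_zero, smul_eq_mul, hN0, sub_zero] at h6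
      rw [← h6, hg₁def]
    have hfg₁ : ∀ᶠ z in 𝓝[≠] (0:ℂ), f₁ z = g₁ z / z ^ m := by
      filter_upwards [hfg, self_mem_nhdsWithin] with z h1 h2
      have hz0 : z ≠ 0 := h2
      simp only [hf₁]
      rw [h1, cot_eq_cfun_div z, div_pow, ← mul_div_assoc, div_sub_div_same]
      have h7 : g z - lam * cfun z ^ (m + 1) = N z := by rw [hNdef]
      rw [h7, hfac z, pow_succ', mul_div_mul_left _ _ hz0]
    have hper₁ : ∀ z : ℂ, f₁ (z + 1) = f₁ z := by
      intro z
      simp only [hf₁]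
      rw [hper]
      have h8 : (Real.pi : ℂ) * (z + 1) = (Real.pi : ℂ) * z + (Real.pi : ℂ) := by ring
      rw [h8, cot_add_pi']
    have hanal₁ : ∀ z : ℂ, (∀ n : ℤ, z ≠ (n : ℂ)) → AnalyticAt ℂ f₁ z := by
      intro z hz
      exact (hanal z hz).sub (analyticAt_const.mul ((cot_anal hz).pow _))
    have hstrip₁ : ∃ M₁, ∀ z : ℂ, 1 ≤ |z.im| →
        norm (f₁ z) ≤ M₁ * Real.exp (C * |z.im|) := by
      refine ⟨M + norm lam * 4 ^ (m + 1), fun z hz => ?_⟩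
      have h9 := hM z hz
      have h10 := cot_bound z hz
      have hexp1 : (1 : ℝ) ≤ Real.exp (C * |z.im|) := Real.one_le_exp (by positivity)
      have h11 : norm (lam * Complex.cot ((Real.pi : ℂ) * z) ^ (m + 1)) ≤
          norm lam * 4 ^ (m + 1) := by
        rw [norm_mul, norm_pow]
        exact mul_le_mul_of_nonneg_left
          (pow_le_pow_left₀ (norm_nonneg _) h10 _) (norm_nonneg _)
      have h12 : norm (f₁ z) ≤ norm (f z) +
          norm (lam * Complex.cot ((Real.pi : ℂ) * z) ^ (m + 1)) := by
        simp only [hf₁]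
        exact norm_sub_le _ _
      have h13 : norm lam * 4 ^ (m + 1) ≤
          norm lam * 4 ^ (m + 1) * Real.exp (C * |z.im|) :=
        le_mul_of_one_le_right (by positivity) hexp1
      nlinarith [Real.exp_pos (C * |z.im|)]
    obtain ⟨P₁, hP₁⟩ := ih f₁ hper₁ hanal₁ hstrip₁ ⟨g₁, hg₁, hfg₁⟩
    refine ⟨P₁ + Polynomial.C lam * Polynomial.X ^ (m + 1), fun z hz => ?_⟩
    rw [Polynomial.eval_add, Polynomial.eval_mul, Polynomial.eval_C, Polynomial.eval_pow,
      Polynomial.eval_X]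
    have h14 := hP₁ z hz
    simp only [hf₁] at h14
    linear_combination h14

end

/-- A 1-periodic meromorphic function on `ℂ` with poles only at the
integers, of growth `O(e^{C|y|})` (with `0 ≤ C < π`) along the imaginary direction,
uniformly for the real part in compact sets, is a polynomial in `cot (π z)`. -/
theorem periodic_moderate_growth_is_cot_polynomial
    (f : ℂ → ℂ)
    (hper : ∀ z : ℂ, f (z + 1) = f z)
    (hanal : ∀ z : ℂ, (∀ n : ℤ, z ≠ (n : ℂ)) → AnalyticAt ℂ f z)
    (hmero : ∀ n : ℤ, MeromorphicAt f (n : ℂ))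
    (C : ℝ) (hC0 : 0 ≤ C) (hCpi : C < Real.pi)
    (hgrowth : ∀ K : Set ℝ, IsCompact K → ∃ M Y : ℝ, ∀ x ∈ K, ∀ y : ℝ,
      Y ≤ |y| → ‖f (x + y * Complex.I)‖ ≤ M * Real.exp (C * |y|)) :
    ∃ P : Polynomial ℂ, ∀ z : ℂ, (∀ n : ℤ, z ≠ (n : ℂ)) →
      f z = P.eval (Complex.cot (Real.pi * z)) := by
  obtain ⟨m, hA⟩ := hmero 0
  have hA' : AnalyticAt ℂ (fun z : ℂ => z ^ m * f z) 0 := by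
    have h0 := hA
    simp only [Int.cast_zero, sub_zero, smul_eq_mul] at h0
    exact h0
  have hfg : ∀ᶠ z in 𝓝[≠] (0:ℂ), f z = (fun z : ℂ => z ^ m * f z) z / z ^ m := by
    filter_upwards [self_mem_nhdsWithin] with z hz
    have hz0 : (z:ℂ) ^ m ≠ 0 := pow_ne_zero _ hz
    rw [mul_comm, mul_div_assoc, div_self hz0, mul_one]
  obtain ⟨M, Y, hMY⟩ := hgrowth (Set.Icc 0 1) isCompact_Icc
  set Y' := max Y 1 with hY'
  set Q : Set ℂ := (fun p : ℝ × ℝ => ((p.1 : ℂ) + (p.2 : ℂ) * Complex.I)) ''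
      ((Set.Icc 0 1) ×ˢ (Set.Icc (-Y') (-1) ∪ Set.Icc 1 Y')) with hQ
  have hQc : IsCompact Q :=
    (isCompact_Icc.prod ((isCompact_Icc).union isCompact_Icc)).image (by continuity)
  have hQcont : ContinuousOn f Q := by
    rintro w ⟨p, hp, rfl⟩
    have him : ((p.1 : ℂ) + (p.2 : ℂ) * Complex.I).im = p.2 := by simp
    rw [Set.mem_prod] at hp
    have h1 : 1 ≤ |((p.1 : ℂ) + (p.2 : ℂ) * Complex.I).im| := by
      rw [him]
      rcases hp.2 with h | h
      · exact le_abs.mpr (Or.inr (by linarith [h.2]))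
      · exact le_abs.mpr (Or.inl h.1)
    have hne : ∀ n : ℤ, ((p.1 : ℂ) + (p.2 : ℂ) * Complex.I) ≠ (n : ℂ) := by
      intro n h
      rw [h] at h1
      simp only [Complex.intCast_im, abs_zero] at h1
      linarith
    exact (hanal _ hne).continuousAt.continuousWithinAt
  obtain ⟨Mc, hMc⟩ := hQc.exists_bound_of_continuousOn hQcont
  have hstrip : ∃ M₀, ∀ z : ℂ, 1 ≤ |z.im| →
      norm (f z) ≤ M₀ * Real.exp (C * |z.im|) := by
    refine ⟨max M Mc, fun z hz => ?_⟩
    set n : ℤ := ⌊z.re⌋ with hn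
    set w : ℂ := z - (n : ℂ) with hw
    have hwim : w.im = z.im := by simp [hw]
    have hwre : w.re = z.re - n := by simp [hw]
    have hfract0 : (0:ℝ) ≤ w.re := by rw [hwre]; exact sub_nonneg.mpr (Int.floor_le _)
    have hfract1 : w.re ≤ 1 := by
      rw [hwre]
      have := Int.lt_floor_add_one z.re
      rw [hn]
      linarith
    have hfw : f w = f z := by
      have hper' : Function.Periodic f 1 := hper
      have h3 : f (z - (n:ℂ) * 1) = f z := hper'.sub_int_mul_eq n
      rw [mul_one] at h3
      exact h3
    have hre_im : (w.re : ℂ) + (w.im : ℂ) * Complex.I = w := Complex.re_add_im w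
    have hexp1 : (1:ℝ) ≤ Real.exp (C * |z.im|) := Real.one_le_exp (by positivity)
    rcases le_or_gt Y |z.im| with hYle | hYlt
    · have h4 := hMY w.re ⟨hfract0, hfract1⟩ w.im (by rw [hwim]; exact hYle)
      rw [hre_im, hfw, hwim] at h4
      calc norm (f z) ≤ M * Real.exp (C * |z.im|) := h4
        _ ≤ max M Mc * Real.exp (C * |z.im|) :=
            mul_le_mul_of_nonneg_right (le_max_left _ _) (Real.exp_pos _).le
    · have hwQ : w ∈ Q := by
        refine ⟨(w.re, w.im), Set.mem_prod.mpr ⟨⟨hfract0, hfract1⟩, ?_⟩, hre_im⟩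
        rw [hwim]
        have hY'le : |z.im| ≤ Y' := le_trans hYlt.le (le_max_left _ _)
        rcases le_or_gt 0 z.im with h0 | h0
        · right
          constructor
          · rwa [_root_.abs_of_nonneg h0] at hz
          · rw [_root_.abs_of_nonneg h0] at hY'le; exact hY'le
        · left
          rw [_root_.abs_of_neg h0] at hz hY'le
          exact ⟨by linarith, by linarith⟩
      have h5 := hMc w hwQ
      rw [hfw] at h5
      have hMc0 : 0 ≤ Mc := le_trans (norm_nonneg _) h5
      calc norm (f z) ≤ Mc := h5
        _ ≤ Mc * Real.exp (C * |z.im|) := le_mul_of_one_le_right hMc0 hexp1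
        _ ≤ max M Mc * Real.exp (C * |z.im|) :=
            mul_le_mul_of_nonneg_right (le_max_right _ _) (Real.exp_pos _).le
  obtain ⟨P, hP⟩ := keyLemma C hC0 hCpi m f hper hanal hstrip
    ⟨fun z : ℂ => z ^ m * f z, hA', hfg⟩
  exact ⟨P, fun z hz => hP z hz⟩
end

section
/- Fix real numbers a₀ and b₀. Then Γ(a₀ + z)/Γ(b₀ + z) = O(|z|^{a₀ − b₀}) uniformly in the upper region Im(z) ≥ 1: there exists a constant K such that for all z ∈ ℂ with Im(z) ≥ 1, |Γ(a₀ + z)/Γ(b₀ + z)| ≤ K·|z|^{a₀ − b₀}. -/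
set_option maxHeartbeats 1000000

open Filter Topology Finset Complex

noncomputable def Complex.abs : AbsoluteValue ℂ ℝ where
  toFun z := ‖z‖
  map_mul' := norm_mul
  nonneg' := norm_nonneg
  eq_zero' _ := norm_eq_zero
  add_le' := norm_add_le

lemma Complex.abs_apply (z : ℂ) : Complex.abs z = Real.sqrt (Complex.normSq z) := Complex.norm_def z

lemma Complex.abs_im_le_abs (z : ℂ) : |z.im| ≤ Complex.abs z := Complex.abs_im_le_norm z

lemma Complex.abs_ofReal (r : ℝ) : Complex.abs (r : ℂ) = |r| := by
  show ‖(r:ℂ)‖ = |r|; simp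

lemma Complex.abs_cpow_eq_rpow_re_of_pos {x : ℝ} (hx : 0 < x) (y : ℂ) :
    Complex.abs ((x : ℂ) ^ y) = x ^ y.re := Complex.norm_cpow_eq_rpow_re_of_pos hx y

lemma Complex.continuous_abs : Continuous Complex.abs := continuous_norm

noncomputable def Hfun (y : ℝ) : ℝ := y / (1 + |y|)

lemma Hfun_abs_le (y : ℝ) : |Hfun y| ≤ 1 := by
  rw [Hfun, _root_.abs_div, _root_.abs_of_pos (by positivity : (0:ℝ) < 1 + |y|)]
  rw [div_le_one (by positivity)]; linarith [_root_.abs_nonneg y]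

lemma Hfun_step (y : ℝ) : 1/(y^2+1) ≤ 4*(Hfun (y+1) - Hfun y) := by
  rcases le_or_gt 0 y with hy | hy
  · rw [Hfun, Hfun, _root_.abs_of_nonneg hy, _root_.abs_of_nonneg (by linarith : (0:ℝ) ≤ y+1)]
    have h1 : (0:ℝ) < 1 + y := by linarith
    have h2 : (0:ℝ) < 1 + (y+1) := by linarith
    have key : (y+1)/(1+(y+1)) - y/(1+y) = 1/((1+(y+1))*(1+y)) := by
      rw [div_sub_div _ _ h2.ne' h1.ne']; congr 1; ring
    rw [key, mul_one_div, div_le_div_iff₀ (by positivity) (by positivity)]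
    nlinarith [sq_nonneg (2*y-3), sq_nonneg y]
  · rcases le_or_gt (y+1) 0 with hy1 | hy1
    · rw [Hfun, Hfun, _root_.abs_of_nonpos hy.le, _root_.abs_of_nonpos hy1]
      have h1 : (0:ℝ) < 1 + -y := by linarith
      have h2 : (0:ℝ) < 1 + -(y+1) := by linarith
      have key : (y+1)/(1+ -(y+1)) - y/(1+ -y) = 1/((1+ -(y+1))*(1+ -y)) := by
        rw [div_sub_div _ _ h2.ne' h1.ne']; congr 1; ring
      rw [key, mul_one_div, div_le_div_iff₀ (by positivity) (by positivity)]
      nlinarith [sq_nonneg (2*y+3), sq_nonneg y]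
    · rw [Hfun, Hfun, _root_.abs_of_nonpos hy.le, _root_.abs_of_pos hy1]
      have h1 : (0:ℝ) < 1 + -y := by linarith
      have h2 : (0:ℝ) < 1 + (y+1) := by linarith
      have key : (y+1)/(1+(y+1)) - y/(1+ -y) = (1 - 2*y - 2*y^2)/((1+(y+1))*(1+ -y)) := by
        rw [div_sub_div _ _ h2.ne' h1.ne']; congr 1; ring
      rw [key, ← mul_div_assoc, div_le_div_iff₀ (by positivity) (by positivity)]
      nlinarith [mul_nonneg (neg_nonneg.mpr hy.le) hy1.le, sq_nonneg y, sq_nonneg (y+1)]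

lemma sum_inv_sq_bound (σ : ℝ) (n : ℕ) :
    ∑ k ∈ range n, 1/((σ+k)^2+1) ≤ 8 := by
  have h1 : ∑ k ∈ range n, 1/((σ+k)^2+1)
      ≤ ∑ k ∈ range n, 4*(Hfun (σ+k+1) - Hfun (σ+k)) := by
    apply Finset.sum_le_sum
    intro k _
    exact Hfun_step (σ+k)
  have h2 : ∑ k ∈ range n, 4*(Hfun (σ+k+1) - Hfun (σ+k))
      = 4 * (Hfun (σ+n) - Hfun σ) := by
    rw [← Finset.mul_sum]
    congr 1
    have h3 := Finset.sum_range_sub (fun k => Hfun (σ+k)) n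
    rw [show Hfun (σ+(n:ℝ)) - Hfun σ = Hfun (σ+(n:ℝ)) - Hfun (σ+(0:ℕ)) by norm_num, ← h3]
    apply Finset.sum_congr rfl
    intro k _
    push_cast
    ring_nf
  have h4 := _root_.abs_le.mp (Hfun_abs_le (σ+n))
  have h5 := _root_.abs_le.mp (Hfun_abs_le σ)
  calc ∑ k ∈ range n, 1/((σ+k)^2+1) ≤ 4 * (Hfun (σ+n) - Hfun σ) := h1.trans_eq h2
    _ ≤ 8 := by linarith [h4.2, h5.1]

lemma log_linear_approx {u : ℝ} (h : -(3/4) ≤ u) : |Real.log (1+u) - u| ≤ 4*u^2 := by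
  have h1 : (0:ℝ) < 1+u := by linarith
  have hup : Real.log (1+u) ≤ u := by
    have := Real.log_le_sub_one_of_pos h1; linarith
  have hlo : u/(1+u) ≤ Real.log (1+u) := by
    have h2 := Real.one_sub_inv_le_log_of_pos h1
    have h3 : 1 - (1+u)⁻¹ = u/(1+u) := by field_simp; ring
    linarith [h3 ▸ h2]
  rw [_root_.abs_le]
  constructor
  · have h6 : u - u/(1+u) = u^2/(1+u) := by field_simp; ring
    have h7 : u^2/(1+u) ≤ 4*u^2 := by
      rw [div_le_iff₀ h1]; nlinarith [sq_nonneg u]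
    nlinarith
  · nlinarith [sq_nonneg u]

lemma term_bound {c x τ : ℝ} (hc0 : 0 ≤ c) (hc : c ≤ 1/2) (hτ : 1 ≤ τ) :
    |(Real.log ((x+c)^2+τ^2) - Real.log (x^2+τ^2))/2
      - c * (Real.log ((x+1)^2+τ^2) - Real.log (x^2+τ^2))/2| ≤ 13/(x^2+1) := by
  have hD : (0:ℝ) < x^2+τ^2 := by nlinarith
  have hD1 : x^2+1 ≤ x^2+τ^2 := by nlinarith
  have hx1 : (0:ℝ) < x^2+1 := by positivity
  set u : ℝ := (2*x+1)/(x^2+τ^2) with hu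
  set v : ℝ := (2*c*x+c^2)/(x^2+τ^2) with hv
  have hEu : (x+1)^2+τ^2 = (x^2+τ^2)*(1+u) := by
    rw [hu]; field_simp; ring
  have hEv : (x+c)^2+τ^2 = (x^2+τ^2)*(1+v) := by
    rw [hv]; field_simp; ring
  have hu34 : -(3/4) ≤ u := by
    rw [hu, le_div_iff₀ hD]; nlinarith [sq_nonneg (3*x+4)]
  have hv34 : -(3/4) ≤ v := by
    rw [hv, le_div_iff₀ hD]; nlinarith [sq_nonneg (3*x+4*c), sq_nonneg c, sq_nonneg x]
  have h1u : (0:ℝ) < 1+u := by linarith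
  have h1v : (0:ℝ) < 1+v := by linarith
  have hLu : Real.log ((x+1)^2+τ^2) = Real.log (x^2+τ^2) + Real.log (1+u) := by
    rw [hEu, Real.log_mul hD.ne' h1u.ne']
  have hLv : Real.log ((x+c)^2+τ^2) = Real.log (x^2+τ^2) + Real.log (1+v) := by
    rw [hEv, Real.log_mul hD.ne' h1v.ne']
  rw [hLu, hLv]
  have e1 : (Real.log (x^2+τ^2) + Real.log (1+v) - Real.log (x^2+τ^2))/2
      - c * (Real.log (x^2+τ^2) + Real.log (1+u) - Real.log (x^2+τ^2))/2
      = (Real.log (1+v) - v)/2 - c*(Real.log (1+u) - u)/2 + (v - c*u)/2 := by ring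
  rw [e1]
  have bv := log_linear_approx hv34
  have bu := log_linear_approx hu34
  -- bound v^2
  have hv2 : v^2 ≤ 2/(x^2+1) := by
    rw [hv, div_pow, div_le_div_iff₀ (by positivity) hx1]
    have k1 : (2*c*x+c^2)^2 ≤ 2*(x^2+1) := by
      have a1 : c^2 ≤ 1/4 := by nlinarith
      have a2 : (2*x+c)^2 ≤ 8*x^2 + 2*c^2 := by nlinarith [sq_nonneg (2*x-c)]
      have a3 : (2*c*x+c^2)^2 = c^2*(2*x+c)^2 := by ring
      have a4 : c^2*(2*x+c)^2 ≤ (1/4)*(2*x+c)^2 :=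
        mul_le_mul_of_nonneg_right a1 (sq_nonneg _)
      nlinarith [sq_nonneg x]
    have k2 : (2*c*x+c^2)^2 * (x^2+1) ≤ 2*(x^2+1)*(x^2+1) :=
      mul_le_mul_of_nonneg_right k1 hx1.le
    have k3 : (x^2+1)*(x^2+1) ≤ (x^2+τ^2)*(x^2+τ^2) :=
      mul_le_mul hD1 hD1 hx1.le hD.le
    calc (2*c*x+c^2)^2 * (x^2+1) ≤ 2*((x^2+1)*(x^2+1)) := by linarith
      _ ≤ 2*((x^2+τ^2)^2) := by rw [pow_two]; linarith
  have hu2 : u^2 ≤ 8/(x^2+1) := by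
    rw [hu, div_pow, div_le_div_iff₀ (by positivity) hx1]
    have k1 : (2*x+1)^2 ≤ 8*(x^2+1) := by nlinarith [sq_nonneg (2*x-1)]
    have k2 : (2*x+1)^2 * (x^2+1) ≤ 8*(x^2+1)*(x^2+1) :=
      mul_le_mul_of_nonneg_right k1 hx1.le
    have k3 : (x^2+1)*(x^2+1) ≤ (x^2+τ^2)*(x^2+τ^2) :=
      mul_le_mul hD1 hD1 hx1.le hD.le
    calc (2*x+1)^2 * (x^2+1) ≤ 8*((x^2+1)*(x^2+1)) := by linarith
      _ ≤ 8*((x^2+τ^2)^2) := by rw [pow_two]; linarith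
  have hvcu : |v - c*u| ≤ 1/(x^2+1) := by
    have e2 : v - c*u = (c^2-c)/(x^2+τ^2) := by
      rw [hv, hu]; field_simp; ring
    rw [e2, _root_.abs_div, _root_.abs_of_pos hD]
    rw [div_le_div_iff₀ hD hx1]
    have : |c^2-c| ≤ 1/4 := by
      rw [_root_.abs_le]; constructor <;> nlinarith [sq_nonneg (2*c-1)]
    nlinarith [_root_.abs_nonneg (c^2-c)]
  have habs : |(Real.log (1+v) - v)/2 - c*(Real.log (1+u) - u)/2 + (v - c*u)/2|
      ≤ |Real.log (1+v) - v|/2 + c*|Real.log (1+u) - u|/2 + |v - c*u|/2 := by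
    have t1 := abs_add_le ((Real.log (1+v) - v)/2 - c*(Real.log (1+u) - u)/2) ((v - c*u)/2)
    have t2 := _root_.abs_sub ((Real.log (1+v) - v)/2) (c*(Real.log (1+u) - u)/2)
    have t3 : |(Real.log (1+v) - v)/2| = |Real.log (1+v) - v|/2 := by
      rw [_root_.abs_div]; norm_num
    have t4 : |c*(Real.log (1+u) - u)/2| = c*|Real.log (1+u) - u|/2 := by
      rw [_root_.abs_div, _root_.abs_mul, _root_.abs_of_nonneg hc0]; norm_num
    have t5 : |(v - c*u)/2| = |v - c*u|/2 := by rw [_root_.abs_div]; norm_num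
    calc |(Real.log (1+v) - v)/2 - c*(Real.log (1+u) - u)/2 + (v - c*u)/2|
        ≤ |(Real.log (1+v) - v)/2 - c*(Real.log (1+u) - u)/2| + |(v - c*u)/2| := t1
      _ ≤ |(Real.log (1+v) - v)/2| + |c*(Real.log (1+u) - u)/2| + |(v - c*u)/2| := by
          have := _root_.abs_sub ((Real.log (1+v) - v)/2) (c*(Real.log (1+u) - u)/2)
          linarith
      _ = |Real.log (1+v) - v|/2 + c*|Real.log (1+u) - u|/2 + |v - c*u|/2 := by
          rw [t3, t4, t5]
  have m0 : c*|Real.log (1+u) - u| ≤ 2*u^2 := by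
    nlinarith [mul_le_mul_of_nonneg_left bu hc0, sq_nonneg u]
  have m1 : |Real.log (1+v) - v|/2 + c*|Real.log (1+u) - u|/2 + |v - c*u|/2
      ≤ 2*v^2 + u^2 + 1/(x^2+1) := by
    nlinarith [_root_.abs_nonneg (v - c*u)]
  have m2 : 2*v^2 + u^2 + 1/(x^2+1) ≤ 13/(x^2+1) := by
    have : 2*v^2 ≤ 2*(2/(x^2+1)) := by linarith
    have e3 : 2*(2/(x^2+1)) + 8/(x^2+1) + 1/(x^2+1) = 13/(x^2+1) := by ring
    linarith
  linarith

lemma sum_term_bound {c τ : ℝ} (σ : ℝ) (hc0 : 0 ≤ c) (hc : c ≤ 1/2) (hτ : 1 ≤ τ) (m : ℕ) :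
    |∑ k ∈ range m, (Real.log ((σ+k+c)^2+τ^2) - Real.log ((σ+k)^2+τ^2))/2
      - c * (Real.log ((σ+m)^2+τ^2) - Real.log (σ^2+τ^2))/2| ≤ 104 := by
  have htel : c * (Real.log ((σ+m)^2+τ^2) - Real.log (σ^2+τ^2))/2
      = ∑ k ∈ range m, c * (Real.log ((σ+k+1)^2+τ^2) - Real.log ((σ+k)^2+τ^2))/2 := by
    have h3 := Finset.sum_range_sub (fun k => c * Real.log ((σ+k)^2+τ^2)/2) m
    have : ∑ k ∈ range m, c * (Real.log ((σ+k+1)^2+τ^2) - Real.log ((σ+k)^2+τ^2))/2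
        = ∑ k ∈ range m, (c * Real.log ((σ+(k+1:ℕ))^2+τ^2)/2 - c * Real.log ((σ+k)^2+τ^2)/2) := by
      apply Finset.sum_congr rfl
      intro k _
      push_cast
      ring
    rw [this, h3]
    push_cast
    ring
  rw [htel, ← Finset.sum_sub_distrib]
  calc |∑ k ∈ range m, ((Real.log ((σ+k+c)^2+τ^2) - Real.log ((σ+k)^2+τ^2))/2
          - c * (Real.log ((σ+k+1)^2+τ^2) - Real.log ((σ+k)^2+τ^2))/2)|
      ≤ ∑ k ∈ range m, |(Real.log ((σ+k+c)^2+τ^2) - Real.log ((σ+k)^2+τ^2))/2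
          - c * (Real.log ((σ+k+1)^2+τ^2) - Real.log ((σ+k)^2+τ^2))/2| :=
        Finset.abs_sum_le_sum_abs _ _
    _ ≤ ∑ k ∈ range m, 13/((σ+k)^2+1) := by
        apply Finset.sum_le_sum
        intro k _
        exact term_bound hc0 hc hτ
    _ = 13 * ∑ k ∈ range m, 1/((σ+k)^2+1) := by
        rw [Finset.mul_sum]
        apply Finset.sum_congr rfl
        intro k _
        ring
    _ ≤ 13 * 8 := by
        have := sum_inv_sq_bound σ m
        linarith
    _ ≤ 104 := by norm_num

lemma abs_one_le (w : ℂ) (him : 1 ≤ w.im) (t : ℝ) (j : ℕ) :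
    (1:ℝ) ≤ Complex.abs (w + t + j) := by
  have h1 : (w + (t:ℂ) + (j:ℂ)).im = w.im := by simp
  have h2 := Complex.abs_im_le_abs (w + t + j)
  have h3 := _root_.le_abs_self (w + (t:ℂ) + (j:ℂ)).im
  rw [h1] at h2 h3
  linarith

lemma abs_one_le' (w : ℂ) (him : 1 ≤ w.im) (j : ℕ) :
    (1:ℝ) ≤ Complex.abs (w + j) := by
  have := abs_one_le w him 0 j
  simpa using this

lemma gammaSeq_ratio (w : ℂ) (c : ℝ) (him : 1 ≤ w.im) (n : ℕ) (hn : 1 ≤ n) :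
    Complex.abs (GammaSeq w n / GammaSeq (w+c) n)
      = (n:ℝ) ^ (-c) * ∏ j ∈ range (n+1), (Complex.abs (w+c+j) / Complex.abs (w+j)) := by
  have hP1 : ∀ j ∈ range (n+1), w + (j:ℂ) ≠ 0 := by
    intro j _
    intro h
    have := abs_one_le' w him j
    rw [h] at this; simp at this; linarith
  have hP2 : ∀ j ∈ range (n+1), w + (c:ℂ) + (j:ℂ) ≠ 0 := by
    intro j _
    intro h
    have := abs_one_le w him c j
    rw [h] at this; simp at this; linarith
  have hNC : (n:ℂ) ≠ 0 := by exact_mod_cast Nat.one_le_iff_ne_zero.mp hn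
  have hNR : (0:ℝ) < (n:ℝ) := by exact_mod_cast hn
  have hfac : ((n.factorial : ℕ) : ℂ) ≠ 0 := by exact_mod_cast (Nat.factorial_pos n).ne'
  have hprod1 : ∏ j ∈ range (n+1), (w + (j:ℂ)) ≠ 0 := Finset.prod_ne_zero_iff.mpr hP1
  have hprod2 : ∏ j ∈ range (n+1), (w + (c:ℂ) + (j:ℂ)) ≠ 0 := Finset.prod_ne_zero_iff.mpr hP2
  have hcp : (n:ℂ) ^ (w + (c:ℂ)) ≠ 0 := by
    rw [Complex.cpow_def_of_ne_zero hNC]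
    exact Complex.exp_ne_zero _
  have hratio : GammaSeq w n / GammaSeq (w+c) n
      = ((n:ℂ) ^ w / (n:ℂ) ^ (w + (c:ℂ))) * ∏ j ∈ range (n+1), ((w + (c:ℂ) + (j:ℂ))/(w + (j:ℂ))) := by
    rw [GammaSeq, GammaSeq, Finset.prod_div_distrib]
    rw [div_div_div_comm, mul_div_mul_comm]
    rw [div_self hfac, mul_one, div_eq_mul_inv _ ((∏ j ∈ range (n+1), (w + (j:ℂ)))/ ∏ j ∈ range (n+1), (w + (c:ℂ) + (j:ℂ))), inv_div]
  rw [hratio, map_mul, map_div₀, map_prod]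
  congr 1
  · -- |n^w| / |n^(w+c)| = n^(-c)
    have e1 : Complex.abs ((n:ℂ) ^ w) = (n:ℝ) ^ w.re := by
      rw [show ((n:ℕ):ℂ) = (((n:ℝ)):ℂ) by push_cast; ring]
      exact Complex.abs_cpow_eq_rpow_re_of_pos hNR w
    have e2 : Complex.abs ((n:ℂ) ^ (w + (c:ℂ))) = (n:ℝ) ^ (w.re + c) := by
      rw [show ((n:ℕ):ℂ) = (((n:ℝ)):ℂ) by push_cast; ring]
      rw [Complex.abs_cpow_eq_rpow_re_of_pos hNR, Complex.add_re, Complex.ofReal_re]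
    rw [e1, e2, ← Real.rpow_sub hNR]
    congr 1
    ring
  · exact Finset.prod_congr rfl (fun j _ => by rw [map_div₀])

lemma core {c : ℝ} (hc0 : 0 ≤ c) (hc : c ≤ 1/2) {w : ℂ} (hw : 1 ≤ w.im) :
    Real.exp (-104) * Complex.abs w ^ (-c) ≤ Complex.abs (Complex.Gamma w / Complex.Gamma (w+c)) ∧
    Complex.abs (Complex.Gamma w / Complex.Gamma (w+c)) ≤ Real.exp 104 * Complex.abs w ^ (-c) := by
  set σ : ℝ := w.re with hσ
  set τ : ℝ := w.im with hτdef
  have hτ : 1 ≤ τ := hw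
  have hτ0 : (0:ℝ) < τ := by linarith
  have hApos : ∀ x : ℝ, (0:ℝ) < x^2 + τ^2 := by intro x; nlinarith
  -- abs formulas
  have habs : ∀ (t : ℝ) (j : ℕ), Complex.abs (w + t + j) = Real.sqrt ((σ+j+t)^2+τ^2) := by
    intro t j
    rw [Complex.abs_apply, Complex.normSq_apply]
    simp only [Complex.add_re, Complex.add_im, Complex.ofReal_re, Complex.ofReal_im,
      Complex.natCast_re, Complex.natCast_im, add_zero]
    congr 1; ring
  have habs' : ∀ (j : ℕ), Complex.abs (w + j) = Real.sqrt ((σ+j)^2+τ^2) := by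
    intro j
    have := habs 0 j
    simpa using this
  have habsw : Complex.abs w = Real.sqrt (σ^2+τ^2) := by
    rw [Complex.abs_apply, Complex.normSq_apply]
    congr 1; ring
  -- product R and its log
  set R : ℕ → ℝ := fun m => ∏ j ∈ range m, (Real.sqrt ((σ+j+c)^2+τ^2) / Real.sqrt ((σ+j)^2+τ^2))
    with hR
  have hRpos : ∀ m, 0 < R m := by
    intro m
    apply Finset.prod_pos
    intro j _
    exact div_pos (Real.sqrt_pos.mpr (hApos _)) (Real.sqrt_pos.mpr (hApos _))
  have hlogR : ∀ m, Real.log (R m)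
      = ∑ k ∈ range m, (Real.log ((σ+k+c)^2+τ^2) - Real.log ((σ+k)^2+τ^2))/2 := by
    intro m
    rw [hR]
    rw [Real.log_prod (fun j _ => (div_pos (Real.sqrt_pos.mpr (hApos _))
      (Real.sqrt_pos.mpr (hApos _))).ne')]
    apply Finset.sum_congr rfl
    intro j _
    rw [Real.log_div (Real.sqrt_pos.mpr (hApos _)).ne' (Real.sqrt_pos.mpr (hApos _)).ne',
      Real.log_sqrt (hApos _).le, Real.log_sqrt (hApos _).le]
    ring
  -- bounds on R from sum_term_bound
  have hGm : ∀ m : ℕ, Real.exp (c * (Real.log ((σ+m)^2+τ^2) - Real.log (σ^2+τ^2))/2)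
      = ((σ+m)^2+τ^2) ^ (c/2) * ((σ^2+τ^2) ^ (c/2))⁻¹ := by
    intro m
    rw [Real.rpow_def_of_pos (hApos _), Real.rpow_def_of_pos (hApos _), ← Real.exp_neg,
      ← Real.exp_add]
    congr 1; ring
  have hRub : ∀ m, R m ≤ Real.exp 104 * (((σ+m)^2+τ^2) ^ (c/2) * ((σ^2+τ^2) ^ (c/2))⁻¹) := by
    intro m
    have h1 := (_root_.abs_le.mp (sum_term_bound σ hc0 hc hτ m)).2
    have h2 : Real.log (R m) ≤ 104 + c * (Real.log ((σ+m)^2+τ^2) - Real.log (σ^2+τ^2))/2 := by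
      rw [hlogR]; linarith
    calc R m = Real.exp (Real.log (R m)) := (Real.exp_log (hRpos m)).symm
      _ ≤ Real.exp (104 + c * (Real.log ((σ+m)^2+τ^2) - Real.log (σ^2+τ^2))/2) :=
          Real.exp_le_exp.mpr h2
      _ = Real.exp 104 * (((σ+m)^2+τ^2) ^ (c/2) * ((σ^2+τ^2) ^ (c/2))⁻¹) := by
          rw [Real.exp_add, hGm]
  have hRlb : ∀ m, Real.exp (-104) * (((σ+m)^2+τ^2) ^ (c/2) * ((σ^2+τ^2) ^ (c/2))⁻¹) ≤ R m := by
    intro m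
    have h1 := (_root_.abs_le.mp (sum_term_bound σ hc0 hc hτ m)).1
    have h2 : -104 + c * (Real.log ((σ+m)^2+τ^2) - Real.log (σ^2+τ^2))/2 ≤ Real.log (R m) := by
      rw [hlogR]; linarith
    calc Real.exp (-104) * (((σ+m)^2+τ^2) ^ (c/2) * ((σ^2+τ^2) ^ (c/2))⁻¹)
        = Real.exp (-104 + c * (Real.log ((σ+m)^2+τ^2) - Real.log (σ^2+τ^2))/2) := by
          rw [Real.exp_add, hGm]
      _ ≤ Real.exp (Real.log (R m)) := Real.exp_le_exp.mpr h2
      _ = R m := Real.exp_log (hRpos m)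
  -- identify q with R
  have hq : ∀ n : ℕ, 1 ≤ n → Complex.abs (GammaSeq w n / GammaSeq (w+c) n)
      = (n:ℝ) ^ (-c) * R (n+1) := by
    intro n hn
    rw [gammaSeq_ratio w c hw n hn, hR]
    congr 1
    apply Finset.prod_congr rfl
    intro j _
    rw [habs c j, habs' j]
  -- Gamma (w+c) nonzero
  have hΓ2 : Complex.Gamma (w + c) ≠ 0 := by
    apply Complex.Gamma_ne_zero
    intro m h
    have h1 : (w + (c:ℂ)).im = τ := by simp [hτdef]
    rw [h] at h1
    simp at h1
    linarith
  have hq_lim : Tendsto (fun n => Complex.abs (GammaSeq w n / GammaSeq (w+c) n)) atTop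
      (𝓝 (Complex.abs (Complex.Gamma w / Complex.Gamma (w+c)))) := by
    exact (Complex.continuous_abs.tendsto _).comp
      ((Complex.GammaSeq_tendsto_Gamma w).div (Complex.GammaSeq_tendsto_Gamma (w+c)) hΓ2)
  set K0 : ℝ := |σ| + τ + 1 with hK0def
  have hK0 : 0 < K0 := by positivity
  set Bpow : ℝ := ((σ^2+τ^2) ^ (c/2))⁻¹ with hBdef
  have hBpos : 0 < Bpow := by
    rw [hBdef]
    exact inv_pos.mpr (Real.rpow_pos_of_pos (hApos σ) _)
  have hBw : Bpow = Complex.abs w ^ (-c) := by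
    rw [hBdef, habsw, Real.sqrt_eq_rpow, ← Real.rpow_mul (hApos σ).le,
      show (1/2)*(-c) = -(c/2) by ring, Real.rpow_neg (hApos σ).le]
  -- key rpow bound (upper)
  have hkey : ∀ n : ℕ, 1 ≤ n →
      (n:ℝ) ^ (-c) * (((σ+(n+1:ℕ))^2+τ^2) ^ (c/2)) ≤ ((K0+(n:ℝ))/(n:ℝ))^c := by
    intro n hn
    have hN : (0:ℝ) < n := by exact_mod_cast hn
    have hA2 : (((σ+(n+1:ℕ))^2+τ^2) : ℝ) ^ (c/2) = (Real.sqrt ((σ+(n+1:ℕ))^2+τ^2))^c := by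
      rw [Real.sqrt_eq_rpow, ← Real.rpow_mul (hApos _).le, show (1/2)*c = c/2 by ring]
    have hsq : Real.sqrt ((σ+(n+1:ℕ))^2+τ^2) ≤ K0 + n := by
      rw [show ((K0 + (n:ℝ))) = Real.sqrt ((K0+(n:ℝ))^2) by
        rw [Real.sqrt_sq (by positivity)]]
      apply Real.sqrt_le_sqrt
      push_cast
      nlinarith [_root_.le_abs_self σ, _root_.neg_abs_le σ, _root_.abs_nonneg σ, hτ0]
    rw [hA2, Real.rpow_neg hN.le, ← div_eq_inv_mul ((Real.sqrt _)^c) ((n:ℝ)^c),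
      ← Real.div_rpow (Real.sqrt_nonneg _) hN.le]
    apply Real.rpow_le_rpow (by positivity) _ hc0
    exact div_le_div_of_nonneg_right hsq hN.le |>.trans_eq rfl
  -- key rpow bound (lower)
  have hkey2 : ∀ n : ℕ, 1 ≤ n → K0 ≤ (n:ℝ) →
      (((n:ℝ)-K0)/(n:ℝ))^c ≤ (n:ℝ) ^ (-c) * (((σ+(n+1:ℕ))^2+τ^2) ^ (c/2)) := by
    intro n hn hK0n
    have hN : (0:ℝ) < n := by exact_mod_cast hn
    have hA2 : (((σ+(n+1:ℕ))^2+τ^2) : ℝ) ^ (c/2) = (Real.sqrt ((σ+(n+1:ℕ))^2+τ^2))^c := by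
      rw [Real.sqrt_eq_rpow, ← Real.rpow_mul (hApos _).le, show (1/2)*c = c/2 by ring]
    have hsq : (n:ℝ) - K0 ≤ Real.sqrt ((σ+(n+1:ℕ))^2+τ^2) := by
      rw [show ((n:ℝ) - K0) = Real.sqrt (((n:ℝ)-K0)^2) by
        rw [Real.sqrt_sq (by linarith)]]
      apply Real.sqrt_le_sqrt
      push_cast
      have e1 : σ + ((n:ℝ)+1) ≥ ((n:ℝ) - K0) + τ + 2 - τ - 2 + 0 := by
        rw [hK0def]
        nlinarith [_root_.neg_abs_le σ]
      have e2 : σ + ((n:ℝ)+1) ≥ (n:ℝ) - K0 := by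
        rw [hK0def]; nlinarith [_root_.neg_abs_le σ]
      nlinarith [e2, sq_nonneg τ, hτ0]
    rw [hA2, Real.rpow_neg hN.le, ← div_eq_inv_mul ((Real.sqrt _)^c) ((n:ℝ)^c),
      ← Real.div_rpow (Real.sqrt_nonneg _) hN.le]
    apply Real.rpow_le_rpow (div_nonneg (by linarith) hN.le) _ hc0
    exact div_le_div_of_nonneg_right hsq hN.le |>.trans_eq rfl
  -- the upper sequence bound
  have hub : ∀ n : ℕ, 1 ≤ n → Complex.abs (GammaSeq w n / GammaSeq (w+c) n)
      ≤ Real.exp 104 * (((K0+(n:ℝ))/(n:ℝ))^c * Bpow) := by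
    intro n hn
    have hN : (0:ℝ) < n := by exact_mod_cast hn
    rw [hq n hn]
    have h1 := hRub (n+1)
    have h2 : (n:ℝ)^(-c) * R (n+1)
        ≤ (n:ℝ)^(-c) * (Real.exp 104 * (((σ+(n+1:ℕ))^2+τ^2) ^ (c/2) * Bpow)) := by
      apply mul_le_mul_of_nonneg_left _ (Real.rpow_nonneg hN.le _)
      rw [hBdef]; exact h1
    have h3 : (n:ℝ)^(-c) * (Real.exp 104 * (((σ+(n+1:ℕ))^2+τ^2) ^ (c/2) * Bpow))
        = Real.exp 104 * (((n:ℝ)^(-c) * (((σ+(n+1:ℕ))^2+τ^2) ^ (c/2))) * Bpow) := by ring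
    have h4 : Real.exp 104 * (((n:ℝ)^(-c) * (((σ+(n+1:ℕ))^2+τ^2) ^ (c/2))) * Bpow)
        ≤ Real.exp 104 * (((K0+(n:ℝ))/(n:ℝ))^c * Bpow) := by
      apply mul_le_mul_of_nonneg_left _ (Real.exp_pos _).le
      exact mul_le_mul_of_nonneg_right (hkey n hn) hBpos.le
    linarith
  -- the lower sequence bound
  have hlb : ∀ n : ℕ, 1 ≤ n → K0 ≤ (n:ℝ) →
      Real.exp (-104) * ((((n:ℝ)-K0)/(n:ℝ))^c * Bpow)
        ≤ Complex.abs (GammaSeq w n / GammaSeq (w+c) n) := by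
    intro n hn hK0n
    have hN : (0:ℝ) < n := by exact_mod_cast hn
    rw [hq n hn]
    have h1 := hRlb (n+1)
    have h2 : (n:ℝ)^(-c) * (Real.exp (-104) * (((σ+(n+1:ℕ))^2+τ^2) ^ (c/2) * Bpow))
        ≤ (n:ℝ)^(-c) * R (n+1) := by
      apply mul_le_mul_of_nonneg_left _ (Real.rpow_nonneg hN.le _)
      rw [hBdef]; exact h1
    have h4 : Real.exp (-104) * ((((n:ℝ)-K0)/(n:ℝ))^c * Bpow)
        ≤ Real.exp (-104) * (((n:ℝ)^(-c) * (((σ+(n+1:ℕ))^2+τ^2) ^ (c/2))) * Bpow) := by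
      apply mul_le_mul_of_nonneg_left _ (Real.exp_pos _).le
      exact mul_le_mul_of_nonneg_right (hkey2 n hn hK0n) hBpos.le
    have h3 : (n:ℝ)^(-c) * (Real.exp (-104) * (((σ+(n+1:ℕ))^2+τ^2) ^ (c/2) * Bpow))
        = Real.exp (-104) * (((n:ℝ)^(-c) * (((σ+(n+1:ℕ))^2+τ^2) ^ (c/2))) * Bpow) := by ring
    linarith
  -- limits of the bounding sequences
  have hT1 : Tendsto (fun n : ℕ => (K0+(n:ℝ))/(n:ℝ)) atTop (𝓝 1) := by
    have h0 : Tendsto (fun n : ℕ => K0 * (1/(n:ℝ)) + 1) atTop (𝓝 (K0 * 0 + 1)) :=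
      (tendsto_one_div_atTop_nhds_zero_nat.const_mul K0).add_const 1
    rw [mul_zero, zero_add] at h0
    apply h0.congr'
    filter_upwards [eventually_ge_atTop 1] with n hn
    have hN : ((n:ℝ)) ≠ 0 := Nat.cast_ne_zero.mpr (by omega)
    field_simp
  have hT1' : Tendsto (fun n : ℕ => ((n:ℝ)-K0)/(n:ℝ)) atTop (𝓝 1) := by
    have h0 : Tendsto (fun n : ℕ => 1 - K0 * (1/(n:ℝ))) atTop (𝓝 (1 - K0 * 0)) :=
      (tendsto_const_nhds.sub (tendsto_one_div_atTop_nhds_zero_nat.const_mul K0))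
    rw [mul_zero, sub_zero] at h0
    apply h0.congr'
    filter_upwards [eventually_ge_atTop 1] with n hn
    have hN : ((n:ℝ)) ≠ 0 := Nat.cast_ne_zero.mpr (by omega)
    field_simp
  have hT2 : Tendsto (fun n : ℕ => Real.exp 104 * (((K0+(n:ℝ))/(n:ℝ))^c * Bpow)) atTop
      (𝓝 (Real.exp 104 * (1 * Bpow))) := by
    apply Tendsto.const_mul
    apply Tendsto.mul_const
    have := hT1.rpow_const (Or.inr hc0)
    rwa [Real.one_rpow] at this
  have hT2' : Tendsto (fun n : ℕ => Real.exp (-104) * ((((n:ℝ)-K0)/(n:ℝ))^c * Bpow)) atTop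
      (𝓝 (Real.exp (-104) * (1 * Bpow))) := by
    apply Tendsto.const_mul
    apply Tendsto.mul_const
    have := hT1'.rpow_const (Or.inr hc0)
    rwa [Real.one_rpow] at this
  constructor
  · -- lower bound
    have hev : ∀ᶠ n : ℕ in atTop, Real.exp (-104) * ((((n:ℝ)-K0)/(n:ℝ))^c * Bpow)
        ≤ Complex.abs (GammaSeq w n / GammaSeq (w+c) n) := by
      filter_upwards [eventually_ge_atTop 1,
        (tendsto_natCast_atTop_atTop (R := ℝ)).eventually_ge_atTop K0] with n h1 h2
      exact hlb n h1 h2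
    have := le_of_tendsto_of_tendsto hT2' hq_lim hev
    rw [one_mul, hBw] at this
    exact this
  · have hev : ∀ᶠ n : ℕ in atTop, Complex.abs (GammaSeq w n / GammaSeq (w+c) n)
        ≤ Real.exp 104 * (((K0+(n:ℝ))/(n:ℝ))^c * Bpow) := by
      filter_upwards [eventually_ge_atTop 1] with n h1
      exact hub n h1
    have := le_of_tendsto_of_tendsto hq_lim hT2 hev
    rw [one_mul, hBw] at this
    exact this

def Sr (a b : ℝ) : Prop := ∃ K : ℝ, 0 < K ∧ ∀ z : ℂ, 1 ≤ z.im →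
  Complex.abs (Complex.Gamma (↑a + z) / Complex.Gamma (↑b + z)) ≤ K * Complex.abs z ^ (a - b)

lemma Gamma_az_ne (a : ℝ) (z : ℂ) (hz : 1 ≤ z.im) : Complex.Gamma (↑a + z) ≠ 0 := by
  apply Complex.Gamma_ne_zero
  intro m h
  have h1 : ((a:ℂ) + z).im = z.im := by simp
  rw [h] at h1
  simp at h1
  linarith

lemma abs_z_ge (z : ℂ) (hz : 1 ≤ z.im) : 1 ≤ Complex.abs z :=
  le_trans hz (le_trans (_root_.le_abs_self _) (Complex.abs_im_le_abs z))

lemma abs_z_pos (z : ℂ) (hz : 1 ≤ z.im) : 0 < Complex.abs z :=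
  lt_of_lt_of_le one_pos (abs_z_ge z hz)

lemma Sr_trans {a b e : ℝ} (h1 : Sr a b) (h2 : Sr b e) : Sr a e := by
  obtain ⟨K₁, hK₁, hb₁⟩ := h1
  obtain ⟨K₂, hK₂, hb₂⟩ := h2
  refine ⟨K₁ * K₂, mul_pos hK₁ hK₂, fun z hz => ?_⟩
  have hbz := Gamma_az_ne b z hz
  have hzpos : 0 < Complex.abs z := by
    have := abs_z_ge z hz; linarith
  have key : Complex.Gamma (↑a + z) / Complex.Gamma (↑e + z)
      = (Complex.Gamma (↑a + z) / Complex.Gamma (↑b + z))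
        * (Complex.Gamma (↑b + z) / Complex.Gamma (↑e + z)) := by
    rw [div_mul_div_cancel₀]
    exact hbz
  rw [key, map_mul]
  calc Complex.abs (Complex.Gamma (↑a + z) / Complex.Gamma (↑b + z))
        * Complex.abs (Complex.Gamma (↑b + z) / Complex.Gamma (↑e + z))
      ≤ (K₁ * Complex.abs z ^ (a - b)) * (K₂ * Complex.abs z ^ (b - e)) := by
        apply mul_le_mul (hb₁ z hz) (hb₂ z hz) (apply_nonneg _ _)
        positivity
    _ = K₁ * K₂ * (Complex.abs z ^ (a - b) * Complex.abs z ^ (b - e)) := by ring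
    _ = K₁ * K₂ * Complex.abs z ^ (a - e) := by
        rw [← Real.rpow_add hzpos]
        norm_num

lemma Sr_refl (a : ℝ) : Sr a a := by
  refine ⟨1, one_pos, fun z hz => ?_⟩
  rw [div_self (Gamma_az_ne a z hz), map_one, sub_self, Real.rpow_zero, one_mul]

lemma Sr_core_pair {c : ℝ} (hc0 : 0 ≤ c) (hc : c ≤ 1/2) (a : ℝ) :
    Sr a (a+c) ∧ Sr (a+c) a := by
  have hconv : ∀ z : ℂ, 1 ≤ z.im → (↑(a+c) + z) = (↑a + z) + (c:ℂ) := by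
    intro z _; push_cast; ring
  have him : ∀ z : ℂ, 1 ≤ z.im → 1 ≤ ((a:ℂ) + z).im := by
    intro z hz; simpa using hz
  -- comparisons of abs (a+z) and abs z raised to power c
  have hcomp1 : ∀ z : ℂ, 1 ≤ z.im →
      Complex.abs ((a:ℂ)+z) ^ (-c) ≤ (1+|a|)^c * Complex.abs z ^ (-c) := by
    intro z hz
    have hz1 := abs_z_ge z hz
    have hw1 := abs_z_ge ((a:ℂ)+z) (him z hz)
    have hzpos : (0:ℝ) < Complex.abs z := by linarith
    have hwpos : (0:ℝ) < Complex.abs ((a:ℂ)+z) := by linarith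
    have h2 : Complex.abs z ≤ (1+|a|) * Complex.abs ((a:ℂ)+z) := by
      have : Complex.abs z = Complex.abs (((a:ℂ)+z) + (-(a:ℂ))) := by ring_nf
      rw [this]
      calc Complex.abs (((a:ℂ)+z) + (-(a:ℂ)))
          ≤ Complex.abs ((a:ℂ)+z) + Complex.abs (-(a:ℂ)) := Complex.abs.add_le _ _
        _ = Complex.abs ((a:ℂ)+z) + |a| := by
              congr 1
              rw [show (-(a:ℂ)) = (((-a:ℝ)):ℂ) by push_cast; ring, Complex.abs_ofReal, _root_.abs_neg]
        _ ≤ (1+|a|) * Complex.abs ((a:ℂ)+z) := by nlinarith [_root_.abs_nonneg a]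
    have hinv : (Complex.abs ((a:ℂ)+z))⁻¹ ≤ (1+|a|) * (Complex.abs z)⁻¹ := by
      rw [← one_div (Complex.abs ((a:ℂ)+z)), ← one_div (Complex.abs z), mul_one_div,
        div_le_div_iff₀ hwpos hzpos]
      nlinarith
    calc Complex.abs ((a:ℂ)+z) ^ (-c) = ((Complex.abs ((a:ℂ)+z))⁻¹)^c := by
          rw [Real.rpow_neg hwpos.le, ← Real.inv_rpow hwpos.le]
      _ ≤ ((1+|a|) * (Complex.abs z)⁻¹)^c := by
          apply Real.rpow_le_rpow (by positivity) hinv hc0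
      _ = (1+|a|)^c * Complex.abs z ^ (-c) := by
          rw [Real.mul_rpow (by positivity) (by positivity), Real.inv_rpow hzpos.le,
            ← Real.rpow_neg hzpos.le]
  have hcomp2 : ∀ z : ℂ, 1 ≤ z.im →
      Complex.abs ((a:ℂ)+z) ^ c ≤ (1+|a|)^c * Complex.abs z ^ c := by
    intro z hz
    have hz1 := abs_z_ge z hz
    have hzpos : (0:ℝ) < Complex.abs z := by linarith
    have h1 : Complex.abs ((a:ℂ)+z) ≤ (1+|a|) * Complex.abs z := by
      calc Complex.abs ((a:ℂ)+z) ≤ Complex.abs (a:ℂ) + Complex.abs z := Complex.abs.add_le _ _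
        _ = |a| + Complex.abs z := by rw [Complex.abs_ofReal]
        _ ≤ (1+|a|) * Complex.abs z := by nlinarith [_root_.abs_nonneg a]
    calc Complex.abs ((a:ℂ)+z) ^ c ≤ ((1+|a|) * Complex.abs z)^c :=
          Real.rpow_le_rpow (apply_nonneg _ _) h1 hc0
      _ = (1+|a|)^c * Complex.abs z ^ c := Real.mul_rpow (by positivity) (by positivity)
  constructor
  · refine ⟨Real.exp 104 * (1+|a|)^c, by positivity, fun z hz => ?_⟩
    have hcore := (core hc0 hc (him z hz)).2
    rw [hconv z hz]
    calc Complex.abs (Complex.Gamma ((a:ℂ)+z) / Complex.Gamma (((a:ℂ)+z) + (c:ℂ)))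
        ≤ Real.exp 104 * Complex.abs ((a:ℂ)+z) ^ (-c) := hcore
      _ ≤ Real.exp 104 * ((1+|a|)^c * Complex.abs z ^ (-c)) := by
          apply mul_le_mul_of_nonneg_left (hcomp1 z hz) (Real.exp_pos _).le
      _ = Real.exp 104 * (1+|a|)^c * Complex.abs z ^ (a - (a+c)) := by
          rw [show a - (a+c) = -c by ring]; ring
  · refine ⟨Real.exp 104 * (1+|a|)^c, by positivity, fun z hz => ?_⟩
    have hcore := (core hc0 hc (him z hz)).1
    have hΓw := Gamma_az_ne a z hz
    have hwpos : (0:ℝ) < Complex.abs ((a:ℂ)+z) := by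
      linarith [abs_z_ge ((a:ℂ)+z) (him z hz)]
    have hXpos : 0 < Complex.abs (Complex.Gamma ((a:ℂ)+z) / Complex.Gamma (((a:ℂ)+z) + (c:ℂ))) := by
      calc (0:ℝ) < Real.exp (-104) * Complex.abs ((a:ℂ)+z) ^ (-c) := by positivity
        _ ≤ _ := hcore
    have hflip : Complex.abs (Complex.Gamma (↑(a+c) + z) / Complex.Gamma (↑a + z))
        = (Complex.abs (Complex.Gamma ((a:ℂ)+z) / Complex.Gamma (((a:ℂ)+z) + (c:ℂ))))⁻¹ := by
      rw [hconv z hz, map_div₀, map_div₀, ← inv_div]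
    rw [hflip]
    have hstep : (Complex.abs (Complex.Gamma ((a:ℂ)+z) / Complex.Gamma (((a:ℂ)+z) + (c:ℂ))))⁻¹
        ≤ (Real.exp (-104) * Complex.abs ((a:ℂ)+z) ^ (-c))⁻¹ := by
      apply inv_anti₀ (by positivity) hcore
    have hsimp : (Real.exp (-104) * Complex.abs ((a:ℂ)+z) ^ (-c))⁻¹
        = Real.exp 104 * Complex.abs ((a:ℂ)+z) ^ c := by
      rw [mul_inv, ← Real.exp_neg, neg_neg, Real.rpow_neg hwpos.le, inv_inv]
    calc (Complex.abs (Complex.Gamma ((a:ℂ)+z) / Complex.Gamma (((a:ℂ)+z) + (c:ℂ))))⁻¹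
        ≤ Real.exp 104 * Complex.abs ((a:ℂ)+z) ^ c := by rw [← hsimp]; exact hstep
      _ ≤ Real.exp 104 * ((1+|a|)^c * Complex.abs z ^ c) := by
          apply mul_le_mul_of_nonneg_left (hcomp2 z hz) (Real.exp_pos _).le
      _ = Real.exp 104 * (1+|a|)^c * Complex.abs z ^ (a + c - a) := by
          rw [show a + c - a = c by ring]; ring

lemma Sr_steps : ∀ n : ℕ, ∀ c : ℝ, 0 ≤ c → c ≤ n/2 → ∀ a : ℝ, Sr a (a+c) ∧ Sr (a+c) a := by
  intro n
  induction n with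
  | zero =>
    intro c hc0 hc a
    have hc' : c = 0 := le_antisymm (by simpa using hc) hc0
    subst hc'
    rw [add_zero]
    exact ⟨Sr_refl a, Sr_refl a⟩
  | succ n ih =>
    intro c hc0 hc a
    by_cases h : c ≤ 1/2
    · exact Sr_core_pair hc0 h a
    · push_neg at h
      have h1 : 0 ≤ c - 1/2 := by linarith
      have h2 : c - 1/2 ≤ n/2 := by
        push_cast at hc ⊢
        linarith
      obtain ⟨s1, s2⟩ := ih (c-1/2) h1 h2 (a+1/2)
      obtain ⟨t1, t2⟩ := Sr_core_pair (by norm_num : (0:ℝ) ≤ 1/2) (le_refl (1/2)) a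
      rw [show (a+1/2) + (c-1/2) = a + c by ring] at s1 s2
      exact ⟨Sr_trans t1 s1, Sr_trans s2 t2⟩

/-- For fixed real `a₀, b₀`, the ratio `Γ(a₀+z)/Γ(b₀+z)` is
`O(|z|^{a₀−b₀})` uniformly in the region `Im z ≥ 1`. -/
theorem gamma_ratio_isBigO_upper_halfplane (a₀ b₀ : ℝ) :
    ∃ K : ℝ, ∀ z : ℂ, 1 ≤ z.im →
      ‖Complex.Gamma (a₀ + z) / Complex.Gamma (b₀ + z)‖ ≤
        K * ‖z‖ ^ (a₀ - b₀) := by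
  rcases le_total a₀ b₀ with h | h
  · have hhalf : b₀ - a₀ ≤ (⌈2*(b₀-a₀)⌉₊ : ℝ)/2 := by
      have := Nat.le_ceil (2*(b₀-a₀))
      linarith
    obtain ⟨K, _, hK⟩ := (Sr_steps ⌈2*(b₀-a₀)⌉₊ (b₀-a₀) (by linarith) hhalf a₀).1
    refine ⟨K, fun z hz => ?_⟩
    have hthis := hK z hz
    rw [show ((a₀ + (b₀ - a₀) : ℝ) : ℂ) = (b₀ : ℂ) by push_cast; ring,
      show a₀ - (a₀ + (b₀ - a₀)) = a₀ - b₀ by ring] at hthis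
    exact hthis
  · have hhalf : a₀ - b₀ ≤ (⌈2*(a₀-b₀)⌉₊ : ℝ)/2 := by
      have := Nat.le_ceil (2*(a₀-b₀))
      linarith
    obtain ⟨K, _, hK⟩ := (Sr_steps ⌈2*(a₀-b₀)⌉₊ (a₀-b₀) (by linarith) hhalf b₀).2
    refine ⟨K, fun z hz => ?_⟩
    have hthis := hK z hz
    rw [show ((b₀ + (a₀ - b₀) : ℝ) : ℂ) = (a₀ : ℂ) by push_cast; ring,
      show b₀ + (a₀ - b₀) - b₀ = a₀ - b₀ by ring] at hthis
    exact hthis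
end
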